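/- arXiv:1307.6505 — 9 statements merged into one kernel-verified Lean document; each statement's English description precedes it below -/
import Mathlib

section
/- Let n ≥ 1 and let a, b : {1,…,n} → ℕ be processing times. Define completion times on the second machine recursively by D_0 = 0 and D_k = max(D_{k-1}, A_k) + b_k for 1 ≤ k ≤ n, where A_k = ∑_{i=1}^{k} a_i is the completion time of job k on the first machine. Then the makespan satisfies D_n = max_{1 ≤ k ≤ n} ( ∑_{i=1}^{k} a_i + ∑_{j=k}^{n} b_j ). -/
/-!
Unfolding the recursion, the sup formula for the first `m` jobs satisfies the same recurrence
as `D`: extending the schedule by job `m + 1` adds `b (m + 1)` to every term `A k + ∑_{j=k}^m b j`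
and contributes the new term `A (m + 1) + b (m + 1)`.
-/

open Finset

def makespanBound (a b : ℕ → ℕ) (m : ℕ) : ℕ :=
  (Icc 1 m).sup fun k => ∑ i ∈ Icc 1 k, a i + ∑ j ∈ Icc k m, b j

theorem makespanBound_zero (a b : ℕ → ℕ) : makespanBound a b 0 = 0 := by
  simp [makespanBound]

theorem makespanBound_succ (a b : ℕ → ℕ) (m : ℕ) :
    makespanBound a b (m + 1) =
      max (makespanBound a b m) (∑ i ∈ Icc 1 (m + 1), a i) + b (m + 1) := by
  have hsum (k : ℕ) (hk : k ∈ Icc 1 m) :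
      ∑ i ∈ Icc 1 k, a i + ∑ j ∈ Icc k (m + 1), b j =
        ∑ i ∈ Icc 1 k, a i + ∑ j ∈ Icc k m, b j + b (m + 1) := by
    rw [sum_Icc_succ_top (by grind), add_assoc]
  have hIcc : Icc 1 (m + 1) = insert (m + 1) (Icc 1 m) :=
    (insert_Icc_right_eq_Icc_add_one (by omega)).symm
  have hshift : (Icc 1 m).sup (fun k => ∑ i ∈ Icc 1 k, a i + ∑ j ∈ Icc k m, b j + b (m + 1)) ⊔
      (∑ i ∈ Icc 1 (m + 1), a i + b (m + 1)) =
      (makespanBound a b m + b (m + 1)) ⊔ (∑ i ∈ Icc 1 (m + 1), a i + b (m + 1)) := by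
    rcases (Icc 1 m).eq_empty_or_nonempty with hm | hm
    · simp [hm, makespanBound]
    · rw [makespanBound, Finset.sup_add hm]
  nth_rw 1 [makespanBound, hIcc]
  rw [sup_insert, sup_congr rfl hsum, Icc_self, sum_singleton,
    sup_comm, hshift, max_add_add_right]

theorem flowshop_makespan_formula_general (n : ℕ) (a b : ℕ → ℕ) (D : ℕ → ℕ)
    (hD0 : D 0 = 0)
    (hD : ∀ k, 1 ≤ k → k ≤ n →
      D k = max (D (k - 1)) (∑ i ∈ Finset.Icc 1 k, a i) + b k) :
    D n = (Finset.Icc 1 n).sup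
      (fun k => ∑ i ∈ Finset.Icc 1 k, a i + ∑ j ∈ Finset.Icc k n, b j) := by
  suffices h : ∀ m ≤ n, D m = makespanBound a b m from h n le_rfl
  intro m hm
  induction m with
  | zero => rw [hD0, makespanBound_zero]
  | succ m ih =>
    rw [hD (m + 1) (by omega) hm, Nat.add_sub_cancel, ih (by omega), makespanBound_succ]

/-- Two-machine flow shop: jobs `1, …, n` with processing times
`a i` on machine `M1` and `b i` on machine `M2`.  The completion times on the
second machine satisfy `D 0 = 0` and `D k = max (D (k-1)) (A k) + b k` where
`A k = ∑_{i=1}^k a i`.  Then the makespan satisfies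
`D n = max_{1 ≤ k ≤ n} (∑_{i=1}^k a i + ∑_{j=k}^n b j)`. -/
theorem flowshop_makespan_formula (n : ℕ) (hn : 1 ≤ n) (a b : ℕ → ℕ) (D : ℕ → ℕ)
    (hD0 : D 0 = 0)
    (hD : ∀ k, 1 ≤ k → k ≤ n →
      D k = max (D (k - 1)) (∑ i ∈ Finset.Icc 1 k, a i) + b k) :
    D n = (Finset.Icc 1 n).sup
      (fun k => ∑ i ∈ Finset.Icc 1 k, a i + ∑ j ∈ Finset.Icc k n, b j) :=
  flowshop_makespan_formula_general n a b D hD0 hD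
end

section
/- Let L be a list of jobs, each job having processing times (a, b) ∈ ℕ × ℕ with a ≤ b, and suppose two adjacent jobs J_i = (a_i, b_i) and J_j = (a_j, b_j) in L satisfy a_i ≤ a_j. Then the makespan of the list obtained from L by swapping J_i and J_j so that J_i is scheduled immediately before J_j is less than or equal to the makespan of the list with J_j immediately before J_i (the other jobs and their positions being fixed). -/
/-!
Each path through the Gantt chart switches machines at one job. Paths switching outside the
block `[p, q]` have the same length in both orders, since they see the block only through its
total first- or second-machine time. Paths switching inside the block have the form
(constant) + (path of the two-job schedule), so it suffices that `makespan [p, q] ≤ makespan [q, p]`.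
The two paths of `[p, q]`, of lengths `p.1 + p.2 + q.2` and `p.1 + q.1 + q.2`, are both dominated
by the path `q.1 + q.2 + p.2` of `[q, p]` switching at `q`, as `p.1 ≤ q.1` and `p.1 ≤ p.2`.
-/

/-- Two-machine flow shop makespan of a list of jobs `(a, b)`, via the formula
`C_max = max_{1 ≤ k ≤ m} (∑_{i=1}^k a_i + ∑_{j=k}^m b_j)` (position `k`
corresponds to `k + 1` with `k ∈ range m` zero-based). -/
def makespan (L : List (ℕ × ℕ)) : ℕ :=
  (Finset.range L.length).sup
    (fun k => ((L.take (k + 1)).map Prod.fst).sum + ((L.drop k).map Prod.snd).sum)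

/-- The length of the path through the Gantt chart that runs on the first machine up to job `k`
and on the second machine from job `k` on; the makespan is the longest such path. -/
def pathLength (L : List (ℕ × ℕ)) (k : ℕ) : ℕ :=
  ((L.take (k + 1)).map Prod.fst).sum + ((L.drop k).map Prod.snd).sum

theorem pathLength_le_makespan {L : List (ℕ × ℕ)} {k : ℕ} (hk : k < L.length) :
    pathLength L k ≤ makespan L :=
  Finset.le_sup (f := pathLength L) (Finset.mem_range.mpr hk)

theorem exists_pathLength_eq_makespan {L : List (ℕ × ℕ)} (hL : L ≠ []) :
    ∃ k < L.length, pathLength L k = makespan L := by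
  obtain ⟨k, hk, h⟩ := Finset.exists_mem_eq_sup (Finset.range L.length)
    (by simpa [Finset.nonempty_range_iff] using hL) (pathLength L)
  exact ⟨k, Finset.mem_range.mp hk, h.symm⟩

theorem pathLength_append_of_lt {L R : List (ℕ × ℕ)} {k : ℕ} (hk : k < L.length) :
    pathLength (L ++ R) k = pathLength L k + (R.map Prod.snd).sum := by
  simp [pathLength, List.take_append_of_le_length hk, List.drop_append_of_le_length hk.le,
    add_assoc]

theorem pathLength_append_length_add (L R : List (ℕ × ℕ)) (k : ℕ) :
    pathLength (L ++ R) (L.length + k) = (L.map Prod.fst).sum + pathLength R k := by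
  rw [pathLength, add_assoc, List.take_length_add_append, List.drop_length_add_append]
  simp [pathLength, add_assoc]

theorem makespan_pair_le_swap (p q : ℕ × ℕ) (hp : p.1 ≤ p.2) (hpq : p.1 ≤ q.1) :
    makespan [p, q] ≤ makespan [q, p] := by
  refine Finset.sup_le fun k hk ↦
    (?_ : pathLength [p, q] k ≤ pathLength [q, p] 0).trans (pathLength_le_makespan (by simp))
  simp only [List.length_cons, List.length_nil, Finset.mem_range] at hk
  interval_cases k <;>
    simp only [pathLength, List.take_succ_cons, List.take_zero, List.take_nil, List.drop_zero,
      List.drop_succ_cons, List.map_cons, List.map_nil, List.sum_cons, List.sum_nil] <;> omega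

theorem makespan_append_le_append (L₁ L₂ : List (ℕ × ℕ)) {M M' : List (ℕ × ℕ)} (hM : M.Perm M')
    (h : makespan M ≤ makespan M') : makespan (L₁ ++ M ++ L₂) ≤ makespan (L₁ ++ M' ++ L₂) := by
  have hlen := hM.length_eq
  have hfst : (M.map Prod.fst).sum = (M'.map Prod.fst).sum := (hM.map _).sum_eq
  have hsnd : (M.map Prod.snd).sum = (M'.map Prod.snd).sum := (hM.map _).sum_eq
  refine Finset.sup_le fun k hk ↦ ?_
  simp only [List.length_append, Finset.mem_range] at hk
  simp only [List.append_assoc] at hk ⊢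
  rcases lt_or_ge k L₁.length with hk₁ | hk₁
  · calc pathLength (L₁ ++ (M ++ L₂)) k = pathLength (L₁ ++ (M' ++ L₂)) k := by
          simp [pathLength_append_of_lt hk₁, hsnd]
      _ ≤ _ := pathLength_le_makespan (by simp only [List.length_append]; omega)
  obtain ⟨i, rfl⟩ := Nat.exists_eq_add_of_le hk₁
  rcases lt_or_ge i M.length with hi | hi
  · obtain ⟨i', hi', hmax⟩ := exists_pathLength_eq_makespan (L := M')
      (List.ne_nil_of_length_pos (by omega))
    calc pathLength (L₁ ++ (M ++ L₂)) (L₁.length + i)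
        = (L₁.map Prod.fst).sum + (pathLength M i + (L₂.map Prod.snd).sum) := by
          rw [pathLength_append_length_add, pathLength_append_of_lt hi]
      _ ≤ (L₁.map Prod.fst).sum + (pathLength M' i' + (L₂.map Prod.snd).sum) := by
          grw [pathLength_le_makespan hi, h, ← hmax]
      _ = pathLength (L₁ ++ (M' ++ L₂)) (L₁.length + i') := by
          rw [pathLength_append_length_add, pathLength_append_of_lt hi']
      _ ≤ _ := pathLength_le_makespan (by simp only [List.length_append]; omega)
  · obtain ⟨j, rfl⟩ := Nat.exists_eq_add_of_le hi
    calc pathLength (L₁ ++ (M ++ L₂)) (L₁.length + (M.length + j))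
        = pathLength (L₁ ++ (M' ++ L₂)) (L₁.length + (M'.length + j)) := by
          simp only [pathLength_append_length_add, hfst]
      _ ≤ _ := pathLength_le_makespan (by simp only [List.length_append]; omega)

/-- If every job of the list satisfies `a ≤ b`, and two adjacent
jobs `(ai, bi)`, `(aj, bj)` satisfy `ai ≤ aj`, then scheduling `(ai, bi)`
immediately before `(aj, bj)` yields a makespan no larger than the reverse
adjacent order (all other jobs fixed). -/
theorem adjacent_swap_le (L1 L2 : List (ℕ × ℕ)) (ai bi aj bj : ℕ)
    (hall : ∀ p ∈ L1 ++ [(ai, bi), (aj, bj)] ++ L2, p.1 ≤ p.2)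
    (hij : ai ≤ aj) :
    makespan (L1 ++ [(ai, bi), (aj, bj)] ++ L2)
      ≤ makespan (L1 ++ [(aj, bj), (ai, bi)] ++ L2) := by
  have hi : ai ≤ bi := hall (ai, bi) (by simp)
  exact makespan_append_le_append L1 L2 (List.Perm.swap _ _ _) (makespan_pair_le_swap _ _ hi hij)
end

section
/- Let L be a list of jobs with processing times in ℕ × ℕ and let L' be a sublist (subsequence) of L. Then the two-machine flow shop makespan of L' is less than or equal to the makespan of L. Moreover, for each position k in L', the completion time on the second machine of the k-th job of L' is less than or equal to the completion time on the second machine of that same job in L. -/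
/-- One step of the two-machine flow shop recursion: the state `(A, D)` records
the completion time `A` on the first machine and `D` on the second machine;
processing a job `(a, b)` updates it to `(A + a, max D (A + a) + b)`,
i.e. `D_k = max (D_{k-1}) (A_k) + b_k`. -/
def flowStep (s : ℕ × ℕ) (p : ℕ × ℕ) : ℕ × ℕ :=
  (s.1 + p.1, max s.2 (s.1 + p.1) + p.2)

/-- Two-machine flow shop makespan of a list of jobs, i.e. the completion time
on the second machine of the last job (`0` for the empty list). -/
def makespanD (L : List (ℕ × ℕ)) : ℕ := (L.foldl flowStep (0, 0)).2

/-!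
Order the states `(A, D)` of the flow shop recursion componentwise. One step `flowStep · p` is
monotone and inflationary in the state, so a fold of such a step can only grow when jobs are
inserted into the list: an inserted job raises the state, and every later step preserves the
inequality. Both claims then follow, the second one applied to the prefixes of `L'` and `L` ending
at the `k`-th job of `L'` and its image in `L`.
-/

namespace List

theorem Sublist.foldl_le_foldl {α β : Type*} [Preorder β] {g : β → α → β}
    (hmono : ∀ a, Monotone fun s ↦ g s a) (hinfl : ∀ s a, s ≤ g s a)
    {l₁ l₂ : List α} (h : l₁ <+ l₂) (s : β) : l₁.foldl g s ≤ l₂.foldl g s := by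
  induction h generalizing s with
  | slnil => exact le_rfl
  | cons a _ ih => exact (ih s).trans (foldl_monotone hmono _ (hinfl s a))
  | cons_cons a _ ih => exact ih (g s a)

theorem take_succ_sublist_take_succ {α : Type*} {l l' : List α}
    (f : Fin l'.length → Fin l.length) (hf : StrictMono f)
    (hget : ∀ i, l'.get i = l.get (f i)) (k : Fin l'.length) :
    l'.take (k + 1) <+ l.take (f k + 1) := by
  have hlt : ∀ i : Fin (l'.take (k + 1)).length, (i : ℕ) < l'.length := fun i ↦
    i.isLt.trans_le (length_take_le' _ _)
  have hle_k : ∀ i : Fin (l'.take (k + 1)).length, (⟨i, hlt i⟩ : Fin l'.length) ≤ k := fun i ↦ by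
    have := i.isLt
    simp only [length_take] at this
    exact Fin.mk_le_of_le_val (by omega)
  have hmaps : ∀ i : Fin (l'.take (k + 1)).length,
      (f ⟨i, hlt i⟩ : ℕ) < (l.take (f k + 1)).length := fun i ↦ by
    have := Fin.le_def.mp (hf.monotone (hle_k i))
    simp only [length_take]
    omega
  rw [sublist_iff_exists_fin_orderEmbedding_get_eq]
  refine ⟨OrderEmbedding.ofStrictMono (fun i ↦ ⟨f ⟨i, hlt i⟩, hmaps i⟩) fun i j hij ↦ hf hij,
    fun i ↦ ?_⟩
  simp only [get_eq_getElem, getElem_take]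
  exact hget ⟨i, hlt i⟩

end List

theorem flowStep_monotone (p : ℕ × ℕ) : Monotone fun s ↦ flowStep s p := fun _ _ h ↦
  have h₁ := Nat.add_le_add_right h.1 p.1
  ⟨h₁, Nat.add_le_add_right (max_le_max h.2 h₁) p.2⟩

theorem le_flowStep (s p : ℕ × ℕ) : s ≤ flowStep s p :=
  ⟨Nat.le_add_right _ _, (le_max_left _ _).trans (Nat.le_add_right _ _)⟩

theorem makespanD_le_of_sublist {L' L : List (ℕ × ℕ)} (h : L'.Sublist L) :
    makespanD L' ≤ makespanD L :=
  (h.foldl_le_foldl flowStep_monotone le_flowStep (0, 0)).2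

/-- If `L'` is a sublist of `L` (witnessed by a strictly
monotone embedding `f` of positions with matching jobs), then the makespan of
`L'` is at most the makespan of `L`, and the completion time on the second
machine of the `k`-th job of `L'` is at most the completion time on the second
machine of that same job (position `f k`) in `L`. -/
theorem sublist_makespan_le (L L' : List (ℕ × ℕ))
    (f : Fin L'.length → Fin L.length) (hf : StrictMono f)
    (hjobs : ∀ i : Fin L'.length, L'.get i = L.get (f i)) :
    makespanD L' ≤ makespanD L ∧
      ∀ k : Fin L'.length,
        makespanD (L'.take ((k : ℕ) + 1)) ≤ makespanD (L.take ((f k : ℕ) + 1)) := by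
  have hsub : L'.Sublist L := List.sublist_iff_exists_fin_orderEmbedding_get_eq.mpr
    ⟨OrderEmbedding.ofStrictMono f hf, hjobs⟩
  exact ⟨makespanD_le_of_sublist hsub, fun k ↦
    makespanD_le_of_sublist (List.take_succ_sublist_take_succ f hf hjobs k)⟩
end

section
/- Let n jobs have processing times a_i, b_i ∈ ℕ with 1 ≤ a_i ≤ b_i and a_1 ≤ … ≤ a_n, and let p be the rightmost pivot of the full sequence. Then for each job J_i with i < p, the contribution of J_i satisfies δ_i = a_i. -/
/-- The value of the critical path through job `k` when the jobs of `S` are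
scheduled in SPT (increasing-index) order:
`∑_{i ∈ S, i ≤ k} a i + ∑_{j ∈ S, j ≥ k} b j`. -/
def jobVal {n : ℕ} (a b : Fin n → ℕ) (S : Finset (Fin n)) (k : Fin n) : ℕ :=
  ∑ i ∈ S.filter (fun i => i ≤ k), a i + ∑ j ∈ S.filter (fun j => k ≤ j), b j

/-- The makespan of the subset `S` of jobs scheduled in SPT (increasing-index)
order: `C(S) = max_{k ∈ S} (∑_{i ∈ S, i ≤ k} a i + ∑_{j ∈ S, j ≥ k} b j)`,
with `C(∅) = 0`. -/
def makespanOf {n : ℕ} (a b : Fin n → ℕ) (S : Finset (Fin n)) : ℕ :=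
  S.sup (jobVal a b S)

/-!
Removing a job `i` from the left of a pivot `p` shortens the critical path through `p` by
exactly `a i`, while every other critical path loses either `a i` (if it passes job `i` on the
first machine) or `b i ≥ a i` (on the second machine). So the makespan drops by exactly `a i`.
-/

namespace FlowShop

variable {n : ℕ} (a b : Fin n → ℕ) {S : Finset (Fin n)} {i k : Fin n}

theorem jobVal_le_makespanOf (hk : k ∈ S) : jobVal a b S k ≤ makespanOf a b S :=
  Finset.le_sup hk

theorem jobVal_erase_add_of_lt (hi : i ∈ S) (hik : i < k) :
    jobVal a b (S.erase i) k + a i = jobVal a b S k := by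
  have hright : (S.erase i).filter (fun j => k ≤ j) = S.filter (fun j => k ≤ j) := by
    rw [Finset.filter_erase]
    exact Finset.erase_eq_of_notMem (by simp [not_le.mpr hik])
  rw [jobVal, jobVal, hright, add_right_comm, Finset.filter_erase,
    Finset.sum_erase_add _ _ (by simp [hi, hik.le])]

theorem jobVal_erase_add_of_gt (hi : i ∈ S) (hki : k < i) :
    jobVal a b (S.erase i) k + b i = jobVal a b S k := by
  have hleft : (S.erase i).filter (fun j => j ≤ k) = S.filter (fun j => j ≤ k) := by
    rw [Finset.filter_erase]
    exact Finset.erase_eq_of_notMem (by simp [not_le.mpr hki])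
  rw [jobVal, jobVal, hleft, add_assoc, Finset.filter_erase,
    Finset.sum_erase_add _ _ (by simp [hi, hki.le])]

theorem makespanOf_erase_add_of_lt_pivot {p : Fin n} (hab : a i ≤ b i) (hi : i ∈ S)
    (hpS : p ∈ S) (hp : jobVal a b S p = makespanOf a b S) (hip : i < p) :
    makespanOf a b (S.erase i) + a i = makespanOf a b S := by
  have hpivot := jobVal_erase_add_of_lt a b hi hip
  have hge : jobVal a b (S.erase i) p ≤ makespanOf a b (S.erase i) :=
    jobVal_le_makespanOf a b (Finset.mem_erase.mpr ⟨hip.ne', hpS⟩)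
  have hle : makespanOf a b (S.erase i) ≤ makespanOf a b S - a i := by
    refine Finset.sup_le fun k hk => ?_
    obtain ⟨hki, hkS⟩ := Finset.mem_erase.mp hk
    have hkC := jobVal_le_makespanOf a b hkS
    rcases lt_or_gt_of_ne hki with hlt | hgt
    · have := jobVal_erase_add_of_gt a b hi hlt
      omega
    · have := jobVal_erase_add_of_lt a b hi hgt
      omega
  omega

end FlowShop

theorem contribution_left_of_pivot_general (n : ℕ) (a b : Fin n → ℕ)
    (hab : ∀ i, a i ≤ b i)
    (p : Fin n)
    (hp : jobVal a b Finset.univ p = makespanOf a b Finset.univ)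
    (i : Fin n) (hi : i < p) :
    makespanOf a b Finset.univ - makespanOf a b (Finset.univ.erase i) = a i := by
  have := FlowShop.makespanOf_erase_add_of_lt_pivot a b (hab i)
    (Finset.mem_univ i) (Finset.mem_univ p) hp hi
  omega

/-- Let `p` be the rightmost pivot of the full sequence (the
largest index attaining the maximum in `C({1,…,n})`).  Then every job `i` to
the left of the pivot has contribution `δ i = C(S) - C(S \ {i}) = a i`. -/
theorem contribution_left_of_pivot (n : ℕ) (a b : Fin n → ℕ)
    (ha1 : ∀ i, 1 ≤ a i) (hab : ∀ i, a i ≤ b i) (hmono : Monotone a)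
    (p : Fin n)
    (hp : jobVal a b Finset.univ p = makespanOf a b Finset.univ)
    (hpmax : ∀ k : Fin n,
      jobVal a b Finset.univ k = makespanOf a b Finset.univ → k ≤ p)
    (i : Fin n) (hi : i < p) :
    makespanOf a b Finset.univ - makespanOf a b (Finset.univ.erase i) = a i :=
  contribution_left_of_pivot_general n a b hab p hp i hi
end

section
/- Let n jobs have processing times a_i, b_i ∈ ℕ with 1 ≤ a_i ≤ b_i and a_1 ≤ … ≤ a_n, and let p be the rightmost pivot of the full sequence. Then for every job J_i with i < p, its contribution satisfies δ_i ≤ δ_p; consequently, the maximal contribution over all jobs is attained by the pivot job or by some job to the right of the pivot. -/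
lemma jobVal_erase_lt {n : ℕ} (a b : Fin n → ℕ) (S : Finset (Fin n))
    {i k : Fin n} (hi : i ∈ S) (h : i < k) :
    jobVal a b (S.erase i) k + a i = jobVal a b S k := by
  unfold jobVal
  rw [Finset.filter_erase, Finset.filter_erase,
    Finset.erase_eq_of_notMem (by simp [h.not_ge] : i ∉ S.filter (fun j => k ≤ j)),
    add_right_comm]
  congr 1
  exact Finset.sum_erase_add _ _ (Finset.mem_filter.mpr ⟨hi, h.le⟩)

lemma jobVal_erase_gt {n : ℕ} (a b : Fin n → ℕ) (S : Finset (Fin n))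
    {i k : Fin n} (hi : i ∈ S) (h : k < i) :
    jobVal a b (S.erase i) k + b i = jobVal a b S k := by
  unfold jobVal
  rw [Finset.filter_erase, Finset.filter_erase,
    Finset.erase_eq_of_notMem (by simp [h.not_ge] : i ∉ S.filter (fun j => j ≤ k)),
    add_assoc]
  congr 1
  exact Finset.sum_erase_add _ _ (Finset.mem_filter.mpr ⟨hi, h.le⟩)

/-- Let `p` be the rightmost pivot of the full sequence.  Then
every job to the left of the pivot has contribution at most the contribution
`δ p` of the pivot; consequently the maximal contribution over all jobs is
attained by the pivot job or by some job to the right of the pivot. -/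
theorem pivot_dominates_left (n : ℕ) (a b : Fin n → ℕ)
    (ha1 : ∀ i, 1 ≤ a i) (hab : ∀ i, a i ≤ b i) (hmono : Monotone a)
    (p : Fin n)
    (hp : jobVal a b Finset.univ p = makespanOf a b Finset.univ)
    (hpmax : ∀ k : Fin n,
      jobVal a b Finset.univ k = makespanOf a b Finset.univ → k ≤ p) :
    (∀ i : Fin n, i < p →
      makespanOf a b Finset.univ - makespanOf a b (Finset.univ.erase i)
        ≤ makespanOf a b Finset.univ - makespanOf a b (Finset.univ.erase p)) ∧
    ∃ m : Fin n, p ≤ m ∧ ∀ i : Fin n,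
      makespanOf a b Finset.univ - makespanOf a b (Finset.univ.erase i)
        ≤ makespanOf a b Finset.univ - makespanOf a b (Finset.univ.erase m) := by
  have key : ∀ i : Fin n, i < p →
      makespanOf a b (Finset.univ.erase p) ≤ makespanOf a b (Finset.univ.erase i) := by
    intro i hip
    apply Finset.sup_le
    intro k hk
    have hkp : k ≠ p := Finset.ne_of_mem_erase hk
    rcases hkp.lt_or_gt with hlt | hgt
    · -- k < p : jobVal (erase p) k + b p = jobVal univ k ≤ C = jobVal (erase i) p + a i
      have h1 : jobVal a b (Finset.univ.erase p) k + b p = jobVal a b Finset.univ k :=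
        jobVal_erase_gt a b _ (Finset.mem_univ p) hlt
      have h2 : jobVal a b (Finset.univ.erase i) p + a i = jobVal a b Finset.univ p :=
        jobVal_erase_lt a b _ (Finset.mem_univ i) hip
      have h3 : jobVal a b Finset.univ k ≤ jobVal a b Finset.univ p := by
        rw [hp]; exact Finset.le_sup (Finset.mem_univ k)
      have h4 : a i ≤ b p := le_trans (hmono hip.le) (hab p)
      have h5 : jobVal a b (Finset.univ.erase p) k + b p ≤
          jobVal a b (Finset.univ.erase i) p + b p := by
        rw [h1]
        calc jobVal a b Finset.univ k ≤ jobVal a b Finset.univ p := h3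
          _ = jobVal a b (Finset.univ.erase i) p + a i := h2.symm
          _ ≤ _ := by omega
      have h6 : jobVal a b (Finset.univ.erase p) k ≤ jobVal a b (Finset.univ.erase i) p := by
        omega
      exact le_trans h6 (Finset.le_sup (Finset.mem_erase.mpr ⟨hip.ne', Finset.mem_univ p⟩))
    · -- p < k
      have h1 : jobVal a b (Finset.univ.erase p) k + a p = jobVal a b Finset.univ k :=
        jobVal_erase_lt a b _ (Finset.mem_univ p) hgt
      have h2 : jobVal a b (Finset.univ.erase i) k + a i = jobVal a b Finset.univ k :=
        jobVal_erase_lt a b _ (Finset.mem_univ i) (hip.trans hgt)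
      have h4 : a i ≤ a p := hmono hip.le
      have h6 : jobVal a b (Finset.univ.erase p) k ≤ jobVal a b (Finset.univ.erase i) k := by
        omega
      exact le_trans h6 (Finset.le_sup (Finset.mem_erase.mpr
        ⟨(hip.trans hgt).ne', Finset.mem_univ k⟩))
  have left : ∀ i : Fin n, i < p →
      makespanOf a b Finset.univ - makespanOf a b (Finset.univ.erase i)
        ≤ makespanOf a b Finset.univ - makespanOf a b (Finset.univ.erase p) := by
    intro i hip
    exact Nat.sub_le_sub_left (key i hip) _
  refine ⟨left, ?_⟩
  obtain ⟨m, hm, hmax⟩ := Finset.exists_max_image (Finset.univ.filter (fun j => p ≤ j))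
    (fun j => makespanOf a b Finset.univ - makespanOf a b (Finset.univ.erase j))
    ⟨p, Finset.mem_filter.mpr ⟨Finset.mem_univ p, le_refl p⟩⟩
  refine ⟨m, (Finset.mem_filter.mp hm).2, fun i => ?_⟩
  rcases le_or_gt p i with hpi | hip
  · exact hmax i (Finset.mem_filter.mpr ⟨Finset.mem_univ i, hpi⟩)
  · exact le_trans (left i hip)
      (hmax p (Finset.mem_filter.mpr ⟨Finset.mem_univ p, le_refl p⟩))
end

section
/- Let n jobs have processing times a_i, b_i ∈ ℕ with 1 ≤ a_i ≤ b_i and a_1 ≤ … ≤ a_n, and let p be the rightmost pivot of the full sequence. If p < n (i.e., some job lies to the right of the pivot), then the rightmost pivot of the sequence obtained by removing job J_p is an index strictly greater than p. -/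
/-!
Write `V` and `V'` for the paths through a job before and after removing the pivot `p`, and let
`j` be the job right after `p`. If the new rightmost pivot `q` lay before `p`, then, since
removing `p` shortens the path through `q` by `b p` and the path through `j` by `a p`, and the
adjacent paths satisfy `V j + b p = V p + a j`,
`V' q = V q - b p ≤ V p - b p = V j - a j ≤ V j - a p = V' j`
by monotonicity of `a`. So `j > q` would be a pivot of the reduced sequence too.
-/

namespace FlowShop

open Finset

variable {n : ℕ} (a b : Fin n → ℕ) {S : Finset (Fin n)} {p k : Fin n}

theorem jobVal_eq_jobVal_erase_add_of_lt (hp : p ∈ S) (hpk : p < k) :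
    jobVal a b S k = jobVal a b (S.erase p) k + a p := by
  have hk : filter (fun j => k ≤ j) (S.erase p) = filter (fun j => k ≤ j) S := by
    rw [filter_erase, erase_eq_of_notMem]
    simpa using fun _ => hpk
  rw [jobVal, jobVal, hk, filter_erase, add_right_comm,
    sum_erase_add _ _ (mem_filter.2 ⟨hp, hpk.le⟩)]

theorem jobVal_eq_jobVal_erase_add_of_gt (hp : p ∈ S) (hkp : k < p) :
    jobVal a b S k = jobVal a b (S.erase p) k + b p := by
  have hk : filter (fun i => i ≤ k) (S.erase p) = filter (fun i => i ≤ k) S := by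
    rw [filter_erase, erase_eq_of_notMem]
    simpa using fun _ => hkp
  rw [jobVal, jobVal, hk, filter_erase, add_assoc,
    sum_erase_add _ _ (mem_filter.2 ⟨hp, hkp.le⟩)]

theorem jobVal_add_eq_of_adjacent {j : Fin n} (hp : p ∈ S) (hj : j ∈ S) (hpj : p < j)
    (hgap : ∀ i ∈ S, p < i → j ≤ i) :
    jobVal a b S j + b p = jobVal a b S p + a j := by
  have hle : filter (fun i => i ≤ j) S = insert j (filter (fun i => i ≤ p) S) := by
    ext i
    simp only [mem_insert, mem_filter]
    constructor
    · rintro ⟨hi, hij⟩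
      rcases hij.lt_or_eq with hij | rfl
      · exact .inr ⟨hi, not_lt.1 fun hpi => (hgap i hi hpi).not_gt hij⟩
      · exact .inl rfl
    · rintro (rfl | ⟨hi, hip⟩)
      · exact ⟨hj, le_rfl⟩
      · exact ⟨hi, hip.trans hpj.le⟩
  have hge : filter (fun i => p ≤ i) S = insert p (filter (fun i => j ≤ i) S) := by
    ext i
    simp only [mem_insert, mem_filter]
    constructor
    · rintro ⟨hi, hpi⟩
      rcases hpi.lt_or_eq with hpi | rfl
      · exact .inr ⟨hi, hgap i hi hpi⟩
      · exact .inl rfl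
    · rintro (rfl | ⟨hi, hji⟩)
      · exact ⟨hp, le_rfl⟩
      · exact ⟨hi, hpj.le.trans hji⟩
  rw [jobVal, jobVal, hle, hge, sum_insert (by simp [hpj]), sum_insert (by simp [hpj])]
  ring

theorem jobVal_erase_le_jobVal_erase_of_pivot (hmono : Monotone a) {j q : Fin n}
    (hp : p ∈ S) (hj : j ∈ S) (hpj : p < j) (hgap : ∀ i ∈ S, p < i → j ≤ i)
    (hpivot : jobVal a b S p = makespanOf a b S) (hq : q ∈ S) (hqp : q < p) :
    jobVal a b (S.erase p) q ≤ jobVal a b (S.erase p) j := by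
  have hqj := jobVal_eq_jobVal_erase_add_of_gt a b hp hqp
  have hjj := jobVal_eq_jobVal_erase_add_of_lt a b hp hpj
  have hadj := jobVal_add_eq_of_adjacent a b hp hj hpj hgap
  have hqle : jobVal a b S q ≤ jobVal a b S p := hpivot ▸ le_sup hq
  have hapj : a p ≤ a j := hmono hpj.le
  omega

end FlowShop

theorem pivot_moves_right_after_removal_general (n : ℕ) (a b : Fin n → ℕ)
    (hmono : Monotone a)
    (p : Fin n)
    (hp : jobVal a b Finset.univ p = makespanOf a b Finset.univ)
    (hright : ∃ j : Fin n, p < j)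
    (q : Fin n) (hq : q ∈ Finset.univ.erase p)
    (hqv : jobVal a b (Finset.univ.erase p) q = makespanOf a b (Finset.univ.erase p))
    (hqmax : ∀ k ∈ Finset.univ.erase p,
      jobVal a b (Finset.univ.erase p) k = makespanOf a b (Finset.univ.erase p) → k ≤ q) :
    p < q := by
  by_contra! hqp
  replace hqp : q < p := hqp.lt_of_ne (Finset.ne_of_mem_erase hq)
  obtain ⟨j', hpj'⟩ := hright
  obtain ⟨j, hpj, -⟩ := exists_covBy_le_of_lt hpj'
  have hjE : j ∈ Finset.univ.erase p := Finset.mem_erase.2 ⟨hpj.lt.ne', Finset.mem_univ j⟩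
  have hjpivot : jobVal a b (Finset.univ.erase p) j = makespanOf a b (Finset.univ.erase p) :=
    le_antisymm (Finset.le_sup hjE) <| hqv ▸
      FlowShop.jobVal_erase_le_jobVal_erase_of_pivot a b hmono (Finset.mem_univ p)
        (Finset.mem_univ j) hpj.lt (fun i _ hpi => hpj.ge_of_gt hpi) hp (Finset.mem_univ q) hqp
  exact (hqmax j hjE hjpivot).not_gt (hqp.trans hpj.lt)

/-- Let `p` be the rightmost pivot of the full sequence.  If
some job lies to the right of the pivot, then the rightmost pivot `q` of the
sequence obtained by removing job `p` satisfies `p < q`. -/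
theorem pivot_moves_right_after_removal (n : ℕ) (a b : Fin n → ℕ)
    (ha1 : ∀ i, 1 ≤ a i) (hab : ∀ i, a i ≤ b i) (hmono : Monotone a)
    (p : Fin n)
    (hp : jobVal a b Finset.univ p = makespanOf a b Finset.univ)
    (hpmax : ∀ k : Fin n,
      jobVal a b Finset.univ k = makespanOf a b Finset.univ → k ≤ p)
    (hright : ∃ j : Fin n, p < j)
    (q : Fin n) (hq : q ∈ Finset.univ.erase p)
    (hqv : jobVal a b (Finset.univ.erase p) q = makespanOf a b (Finset.univ.erase p))
    (hqmax : ∀ k ∈ Finset.univ.erase p,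
      jobVal a b (Finset.univ.erase p) k = makespanOf a b (Finset.univ.erase p) → k ≤ q) :
    p < q :=
  pivot_moves_right_after_removal_general n a b hmono p hp hright q hq hqv hqmax
end

section
/- Let n jobs have processing times a_i, b_i ∈ ℕ with 1 ≤ a_i ≤ b_i and a_1 ≤ … ≤ a_n. Define f(k) = min { C(T) : T ⊆ {1,…,n}, |T| = n − k } for 0 ≤ k ≤ n. Then f is strictly decreasing: f(0) > f(1) > … > f(n) = 0. Consequently, the n + 1 pairs (f(k), k), k = 0,…,n, are pairwise non-dominated (Pareto optimal) outcomes for the bicriteria objective of simultaneously minimizing the common due date d and the number of tardy jobs n_T. -/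
/-
Deleting a retained job `j` shortens every remaining critical path: a path through `k < j`
loses `b j`, one through `k > j` loses `a j`, and both are positive.  Hence an optimal set of
`n - k` jobs minus any job is a set of `n - (k + 1)` jobs with strictly smaller makespan, so
`f (k + 1) < f k`; strict monotonicity of `f` rules out domination among the pairs `(f k, k)`.
-/

variable {n : ℕ} {a b : Fin n → ℕ} {S : Finset (Fin n)} {j : Fin n}

lemma le_jobVal_self (hj : j ∈ S) : a j ≤ jobVal a b S j :=
  calc a j ≤ ∑ i ∈ S.filter (· ≤ j), a i :=
        Finset.single_le_sum (fun _ _ => Nat.zero_le _) (by simp [hj])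
    _ ≤ jobVal a b S j := Nat.le_add_right _ _

lemma jobVal_erase_lt_s12 (ha : 0 < a j) (hb : 0 < b j) (hj : j ∈ S) {k : Fin n} (hkj : k ≠ j) :
    jobVal a b (S.erase j) k < jobVal a b S k := by
  unfold jobVal
  rw [Finset.filter_erase, Finset.filter_erase]
  rcases hkj.lt_or_gt with hkj | hjk
  · have hj_after : j ∈ S.filter (k ≤ ·) := by simp [hj, hkj.le]
    have hj_before : j ∉ S.filter (· ≤ k) := by simp [hkj]
    rw [Finset.erase_eq_of_notMem hj_before]
    exact Nat.add_lt_add_left (Finset.sum_erase_lt_of_pos hj_after hb) _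
  · have hj_before : j ∈ S.filter (· ≤ k) := by simp [hj, hjk.le]
    have hj_after : j ∉ S.filter (k ≤ ·) := by simp [hjk]
    rw [Finset.erase_eq_of_notMem hj_after]
    exact Nat.add_lt_add_right (Finset.sum_erase_lt_of_pos hj_before ha) _

lemma makespanOf_erase_lt (ha : 0 < a j) (hb : 0 < b j) (hj : j ∈ S) :
    makespanOf a b (S.erase j) < makespanOf a b S := by
  have hpos : 0 < makespanOf a b S :=
    ha.trans_le ((le_jobVal_self hj).trans (Finset.le_sup hj))
  rw [makespanOf, Finset.sup_lt_iff hpos]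
  intro k hk
  exact (jobVal_erase_lt_s12 ha hb hj (Finset.ne_of_mem_erase hk)).trans_le
    (Finset.le_sup (Finset.mem_of_mem_erase hk))

theorem pareto_front_strictly_decreasing_general (n : ℕ) (a b : Fin n → ℕ)
    (ha1 : ∀ i, 1 ≤ a i) (hab : ∀ i, a i ≤ b i)
    (f : ℕ → ℕ)
    (hf : ∀ k ≤ n,
      (∃ T : Finset (Fin n), T.card = n - k ∧ makespanOf a b T = f k) ∧
      ∀ T : Finset (Fin n), T.card = n - k → f k ≤ makespanOf a b T) :
    (∀ k < n, f (k + 1) < f k) ∧ f n = 0 ∧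
      ∀ k ≤ n, ∀ k' ≤ n,
        ¬(f k ≤ f k' ∧ k ≤ k' ∧ (f k, k) ≠ (f k', k')) := by
  have hdec : ∀ k < n, f (k + 1) < f k := by
    intro k hk
    obtain ⟨T, hT, hTf⟩ := (hf k hk.le).1
    obtain ⟨j, hj⟩ : T.Nonempty := by rw [← Finset.card_pos, hT]; omega
    have hcard : (T.erase j).card = n - (k + 1) := by
      rw [Finset.card_erase_of_mem hj, hT]; omega
    calc f (k + 1) ≤ makespanOf a b (T.erase j) := (hf (k + 1) hk).2 _ hcard
      _ < makespanOf a b T := makespanOf_erase_lt (ha1 j) ((ha1 j).trans (hab j)) hj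
      _ = f k := hTf
  have hfn : f n = 0 := by
    simpa [makespanOf] using (hf n le_rfl).2 ∅ (by simp)
  have hanti : StrictAntiOn f (Set.Iic n) :=
    strictAntiOn_Iic_of_succ_lt fun m hm => by simpa using hdec m hm
  refine ⟨hdec, hfn, fun k hk k' hk' ⟨hle, hkk', hne⟩ => ?_⟩
  rcases hkk'.lt_or_eq with hlt | rfl
  · exact (hanti hk hk' hlt).not_ge hle
  · exact hne rfl

/-- Let `f k` be the minimal makespan over all subsets of
`n - k` retained jobs.  Then `f` is strictly decreasing with `f n = 0`, and
consequently the `n + 1` pairs `(f k, k)` are pairwise non-dominated (Pareto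
optimal) outcomes for the bicriteria objective `(d, n_T)`. -/
theorem pareto_front_strictly_decreasing (n : ℕ) (a b : Fin n → ℕ)
    (ha1 : ∀ i, 1 ≤ a i) (hab : ∀ i, a i ≤ b i) (hmono : Monotone a)
    (f : ℕ → ℕ)
    (hf : ∀ k ≤ n,
      (∃ T : Finset (Fin n), T.card = n - k ∧ makespanOf a b T = f k) ∧
      ∀ T : Finset (Fin n), T.card = n - k → f k ≤ makespanOf a b T) :
    (∀ k < n, f (k + 1) < f k) ∧ f n = 0 ∧
      ∀ k ≤ n, ∀ k' ≤ n,
        ¬(f k ≤ f k' ∧ k ≤ k' ∧ (f k, k) ≠ (f k', k')) :=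
  pareto_front_strictly_decreasing_general n a b ha1 hab f hf
end

section
/- Let n jobs have processing times a_i, b_i ∈ ℕ with 1 ≤ a_i ≤ b_i, and let d ∈ ℕ. Then the following are equivalent: (1) there exists a permutation schedule of all n jobs (some order σ of {1,…,n}) in which at most t jobs have second-machine completion time exceeding d; (2) there exists a subset T of jobs with |T| ≥ n − t such that the makespan of T, scheduled in SPT order, is at most d. In other words, the minimal number of tardy jobs achievable with common due date d equals n − max { |T| : C(T) ≤ d }. -/
/-- Two-machine flow shop makespan of a list of `m` jobs via the formula
`C_max = max_{1 ≤ k ≤ m} (∑_{i=1}^k a_i + ∑_{j=k}^m b_j)`. -/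
def makespanF (L : List (ℕ × ℕ)) : ℕ :=
  (Finset.range L.length).sup
    (fun k => ((L.take (k + 1)).map Prod.fst).sum + ((L.drop k).map Prod.snd).sum)

/-!
Both the flow-shop recursion and the max-formula satisfy
`C(p :: L) = aₚ + max (bₚ + ∑_{q ∈ L} b_q) (C L)`, so the makespan is monotone under passing to
subsequences. Hence the on-time jobs of any schedule, kept in schedule order, have makespan at
most `d`: they form a subsequence of the prefix ending with the last on-time job. Since
`aᵢ ≤ bᵢ`, putting them in SPT order does not increase the makespan (Johnson's adjacent
interchange). Conversely, scheduling a set `T` with `C(T) ≤ d` first, in SPT order, makes every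
job of `T` on time.
-/

theorem foldl_flowStep (L : List (ℕ × ℕ)) {A D : ℕ} (h : A ≤ D) :
    L.foldl flowStep (A, D) =
      (A + (L.map Prod.fst).sum, max (D + (L.map Prod.snd).sum) (A + makespanD L)) := by
  induction L generalizing A D with
  | nil =>
    simp only [List.foldl_nil, List.map_nil, List.sum_nil, add_zero, makespanD, Prod.mk.injEq,
      left_eq_sup, true_and]
    exact h
  | cons p L ih =>
    have hp : makespanD (p :: L) =
        max (p.1 + p.2 + (L.map Prod.snd).sum) (p.1 + makespanD L) := by
      simp only [makespanD, List.foldl_cons, flowStep,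
        ih (show 0 + p.1 ≤ max 0 (0 + p.1) + p.2 by omega)]
      omega
    simp only [List.foldl_cons, flowStep, ih (show A + p.1 ≤ max D (A + p.1) + p.2 by omega), hp,
      List.map_cons, List.sum_cons, Prod.mk.injEq]
    omega

theorem makespanD_cons (p : ℕ × ℕ) (L : List (ℕ × ℕ)) :
    makespanD (p :: L) = p.1 + max (p.2 + (L.map Prod.snd).sum) (makespanD L) := by
  simp only [makespanD, List.foldl_cons, flowStep,
    foldl_flowStep L (show 0 + p.1 ≤ max 0 (0 + p.1) + p.2 by omega)]
  omega

theorem List.Sublist.makespanD_le {L₁ L₂ : List (ℕ × ℕ)} (h : L₁.Sublist L₂) :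
    makespanD L₁ ≤ makespanD L₂ := by
  induction h with
  | slnil => exact le_rfl
  | cons p _ ih => rw [makespanD_cons]; omega
  | cons_cons p h ih =>
    have := (h.map Prod.snd).sum_le_sum fun _ _ => Nat.zero_le _
    rw [makespanD_cons, makespanD_cons]; omega

theorem max_add_sup_add {ι : Type*} (s : Finset ι) (c x : ℕ) (g : ι → ℕ) :
    max (c + x) (s.sup fun k => c + g k) = c + max x (s.sup g) := by
  induction s using Finset.cons_induction with
  | empty => simp
  | cons i s _ ih => simp only [Finset.sup_cons]; omega

theorem makespanF_cons (p : ℕ × ℕ) (L : List (ℕ × ℕ)) :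
    makespanF (p :: L) = p.1 + max (p.2 + (L.map Prod.snd).sum) (makespanF L) := by
  rw [makespanF, makespanF, List.length_cons, Finset.range_add_one', Finset.sup_insert,
    Finset.sup_map, ← max_add_sup_add]
  simp only [zero_add, List.take_succ_cons, List.take_zero, List.map_cons, List.map_nil,
    List.sum_cons, List.sum_nil, add_zero, List.drop_zero, List.map_take, List.map_drop, add_assoc,
    Function.comp_def]
  rfl

theorem makespanF_eq_makespanD : ∀ L : List (ℕ × ℕ), makespanF L = makespanD L
  | [] => rfl
  | p :: L => by rw [makespanF_cons, makespanD_cons, makespanF_eq_makespanD L]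

section Johnson

variable {ι : Type*} (job : ι → ℕ × ℕ)

theorem makespanD_orderedInsert_le (x : ι) (l : List ι) (hl : ∀ i ∈ l, (job i).1 ≤ (job i).2) :
    makespanD ((l.orderedInsert (fun i j => (job i).1 ≤ (job j).1) x).map job)
      ≤ makespanD ((x :: l).map job) := by
  induction l with
  | nil => exact le_rfl
  | cons y l ih =>
    rw [List.orderedInsert_cons]
    split_ifs with hxy
    · exact le_rfl
    have hy := hl y List.mem_cons_self
    have ih := ih fun i hi => hl i (List.mem_cons_of_mem y hi)
    have hsum := (((List.perm_orderedInsert (fun i j => (job i).1 ≤ (job j).1) x l).map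
      job).map Prod.snd).sum_eq
    simp only [List.map_cons, makespanD_cons, List.sum_cons] at ih hsum ⊢
    omega

theorem makespanD_insertionSort_le (l : List ι) (hl : ∀ i ∈ l, (job i).1 ≤ (job i).2) :
    makespanD ((l.insertionSort (fun i j => (job i).1 ≤ (job j).1)).map job)
      ≤ makespanD (l.map job) := by
  induction l with
  | nil => exact le_rfl
  | cons x l ih =>
    have hperm := List.perm_insertionSort (fun i j => (job i).1 ≤ (job j).1) l
    have hsum := ((hperm.map job).map Prod.snd).sum_eq
    have ih := ih fun i hi => hl i (List.mem_cons_of_mem x hi)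
    calc makespanD ((List.insertionSort _ (x :: l)).map job)
        ≤ makespanD ((x :: l.insertionSort fun i j => (job i).1 ≤ (job j).1).map job) :=
          makespanD_orderedInsert_le job x _ fun i hi =>
            hl i (List.mem_cons_of_mem x (hperm.subset hi))
      _ ≤ makespanD ((x :: l).map job) := by
          simp only [List.map_cons, makespanD_cons] at hsum ⊢
          omega

end Johnson

def completionTime {n : ℕ} (f : Fin n → ℕ × ℕ) (k : Fin n) : ℕ :=
  makespanD ((List.ofFn f).take (k + 1))

theorem completionTime_castSucc {n : ℕ} (f : Fin (n + 1) → ℕ × ℕ) (k : Fin n) :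
    completionTime f k.castSucc = completionTime (fun i => f i.castSucc) k := by
  rw [completionTime, completionTime, List.ofFn_succ_last,
    List.take_append_of_le_length (by simp), Fin.val_castSucc]

theorem makespanD_map_filter_completionTime_le (d : ℕ) : ∀ {n : ℕ} (f : Fin n → ℕ × ℕ),
    makespanD (((List.finRange n).filter fun k => completionTime f k ≤ d).map f) ≤ d
  | 0, _ => Nat.zero_le d
  | n + 1, f => by
    by_cases hlast : completionTime f (Fin.last n) ≤ d
    · refine le_trans (List.Sublist.makespanD_le ?_) hlast
      rw [Fin.val_last, List.take_of_length_le (by simp), List.ofFn_eq_map]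
      exact List.filter_sublist.map f
    · simpa [List.finRange_succ_last, List.filter_append, List.filter_map, hlast,
        Function.comp_def, completionTime_castSucc] using
        makespanD_map_filter_completionTime_le d fun i => f i.castSucc

theorem Function.Injective.exists_perm_ofFn_prefix {m n : ℕ} {g : Fin m → Fin n}
    (hg : Function.Injective g) : ∃ σ : Equiv.Perm (Fin n), List.ofFn g <+: List.ofFn σ := by
  set l := List.ofFn g ++ (List.finRange n).filter (· ∉ List.ofFn g)
  have hnodup : l.Nodup :=
    (List.nodup_ofFn.mpr hg).append ((List.nodup_finRange n).filter _) fun i hi hi' => by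
      simp_all
  have hmem : ∀ i, i ∈ l := fun i => by
    by_cases hi : i ∈ List.ofFn g
    · exact List.mem_append_left _ hi
    · exact List.mem_append_right _
        (List.mem_filter.mpr ⟨List.mem_finRange i, decide_eq_true hi⟩)
  let e := List.Nodup.getEquivOfForallMemList l hnodup hmem
  have hlen : l.length = n := by simpa using Fintype.card_congr e
  exact ⟨(finCongr hlen.symm).trans e, (List.finRange n).filter (· ∉ List.ofFn g),
    (List.ofFn_get l).symm.trans (List.ofFn_congr hlen l.get)⟩

theorem completionTime_le_of_prefix {n : ℕ} {f : Fin n → ℕ × ℕ} {L : List (ℕ × ℕ)}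
    (h : L <+: List.ofFn f) (k : Fin n) (hk : k < L.length) :
    completionTime f k ≤ makespanD L := by
  obtain ⟨r, hr⟩ := h
  rw [completionTime, ← hr, List.take_append_of_le_length hk]
  exact (List.take_sublist _ _).makespanD_le

theorem card_filter_lt_eq_sub_card_filter_le {α : Type*} [Fintype α] (f : α → ℕ) (d : ℕ) :
    (Finset.univ.filter fun k => d < f k).card
      = Fintype.card α - (Finset.univ.filter fun k => f k ≤ d).card := by
  have := Finset.card_filter_add_card_filter_not (s := Finset.univ) (fun k => f k ≤ d)
  simp only [not_le, Finset.card_univ] at this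
  omega

theorem exists_sorted_nodup_of_schedule {ι : Type*} (job : ι → ℕ × ℕ)
    (hjob : ∀ i, (job i).1 ≤ (job i).2) (d : ℕ) {n : ℕ} {σ : Fin n → ι}
    (hσ : Function.Injective σ) :
    ∃ l : List ι, l.Nodup ∧ l.Pairwise (fun i j => (job i).1 ≤ (job j).1) ∧
      l.length = (Finset.univ.filter fun k => completionTime (job ∘ σ) k ≤ d).card ∧
      makespanD (l.map job) ≤ d := by
  let onTime := ((List.finRange n).filter fun k => completionTime (job ∘ σ) k ≤ d).map σ
  refine ⟨onTime.insertionSort fun i j => (job i).1 ≤ (job j).1,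
    (List.perm_insertionSort _ _).nodup_iff.mpr (((List.nodup_finRange n).filter _).map hσ),
    List.pairwise_insertionSort _ _, by rw [List.length_insertionSort, List.length_map]; rfl, ?_⟩
  refine (makespanD_insertionSort_le job onTime fun i _ => hjob i).trans ?_
  simpa [onTime, List.map_map] using makespanD_map_filter_completionTime_le d (job ∘ σ)

theorem exists_perm_card_filter_completionTime_le {m n : ℕ} (job : Fin n → ℕ × ℕ) (d : ℕ)
    {g : Fin m → Fin n} (hg : Function.Injective g) (hgd : makespanD (List.ofFn (job ∘ g)) ≤ d) :
    ∃ σ : Equiv.Perm (Fin n),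
      m ≤ (Finset.univ.filter fun k => completionTime (job ∘ σ) k ≤ d).card := by
  obtain ⟨σ, hσ⟩ := hg.exists_perm_ofFn_prefix
  have hprefix : List.ofFn (job ∘ g) <+: List.ofFn (job ∘ σ) := by
    simpa only [List.map_ofFn] using hσ.map job
  have hmn : m ≤ n := by simpa using Fintype.card_le_of_injective g hg
  refine ⟨σ, ?_⟩
  calc m = (Finset.univ.map (Fin.castLEEmb hmn)).card := by simp
    _ ≤ _ := Finset.card_le_card fun k hk => ?_
  obtain ⟨i, -, rfl⟩ := Finset.mem_map.mp hk
  exact Finset.mem_filter.mpr ⟨Finset.mem_univ _,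
    (completionTime_le_of_prefix hprefix _ (by simp)).trans hgd⟩

theorem tardy_jobs_iff_subset_general (n : ℕ) (a b : Fin n → ℕ)
    (hab : ∀ i, a i ≤ b i) (d t : ℕ) :
    (∃ σ : Equiv.Perm (Fin n),
      ((Finset.univ : Finset (Fin n)).filter (fun k : Fin n =>
        d < makespanD ((List.ofFn (fun i => (a (σ i), b (σ i)))).take ((k : ℕ) + 1)))).card
        ≤ t)
    ↔ (∃ (m : ℕ) (g : Fin m → Fin n), Function.Injective g ∧
        (∀ i j : Fin m, i ≤ j → a (g i) ≤ a (g j)) ∧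
        n - t ≤ m ∧
        makespanF (List.ofFn (fun i => (a (g i), b (g i)))) ≤ d) := by
  let job : Fin n → ℕ × ℕ := fun i => (a i, b i)
  constructor
  · rintro ⟨σ, hσ⟩
    change (Finset.univ.filter fun k => d < completionTime (job ∘ σ) k).card ≤ t at hσ
    rw [card_filter_lt_eq_sub_card_filter_le, Fintype.card_fin] at hσ
    obtain ⟨l, hl_nodup, hl_sorted, hl_length, hl_makespan⟩ :=
      exists_sorted_nodup_of_schedule job hab d σ.injective
    refine ⟨l.length, l.get, List.nodup_iff_injective_get.mp hl_nodup,
      fun i j hij => hl_sorted.rel_get_of_le hij, by omega, ?_⟩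
    rwa [makespanF_eq_makespanD, List.ofFn_comp' l.get job, List.ofFn_get]
  · rintro ⟨m, g, hg, -, hm, hgd⟩
    rw [makespanF_eq_makespanD] at hgd
    obtain ⟨σ, hσ⟩ := exists_perm_card_filter_completionTime_le job d hg hgd
    refine ⟨σ, ?_⟩
    change (Finset.univ.filter fun k => d < completionTime (job ∘ σ) k).card ≤ t
    rw [card_filter_lt_eq_sub_card_filter_le, Fintype.card_fin]
    omega

/-- For jobs with `1 ≤ a i ≤ b i` and a common due date `d`,
the following are equivalent: (1) some permutation schedule of all `n` jobs has
at most `t` jobs whose second-machine completion time exceeds `d`; (2) there is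
a set of at least `n - t` jobs which, listed in nondecreasing order of their
`a`-values (SPT order), has makespan at most `d`.  Hence the minimal number of
tardy jobs for due date `d` is `n - max {|T| : C(T) ≤ d}`. -/
theorem tardy_jobs_iff_subset (n : ℕ) (a b : Fin n → ℕ)
    (ha1 : ∀ i, 1 ≤ a i) (hab : ∀ i, a i ≤ b i) (d t : ℕ) :
    (∃ σ : Equiv.Perm (Fin n),
      ((Finset.univ : Finset (Fin n)).filter (fun k : Fin n =>
        d < makespanD ((List.ofFn (fun i => (a (σ i), b (σ i)))).take ((k : ℕ) + 1)))).card
        ≤ t)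
    ↔ (∃ (m : ℕ) (g : Fin m → Fin n), Function.Injective g ∧
        (∀ i j : Fin m, i ≤ j → a (g i) ≤ a (g j)) ∧
        n - t ≤ m ∧
        makespanF (List.ofFn (fun i => (a (g i), b (g i)))) ≤ d) :=
  tardy_jobs_iff_subset_general n a b hab d t
end

section
/- Let n jobs have processing times a_i, b_i ∈ ℕ with 1 ≤ a_i ≤ b_i and a_1 ≤ … ≤ a_n, and let p be the rightmost pivot of the full sequence. Then the makespan after removing the pivot satisfies C({1,…,n} ∖ {p}) ≤ C({1,…,n}) − a_p; that is, the contribution of the pivot job satisfies δ_p ≥ a_p. -/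
/-- Let `p` be the rightmost pivot of the full sequence.
Then removing the pivot decreases the makespan by at least `a p`, i.e.
`C({1,…,n} \ {p}) + a p ≤ C({1,…,n})` (equivalently `δ p ≥ a p`). -/
theorem pivot_contribution_ge (n : ℕ) (a b : Fin n → ℕ)
    (ha1 : ∀ i, 1 ≤ a i) (hab : ∀ i, a i ≤ b i) (hmono : Monotone a)
    (p : Fin n)
    (hp : jobVal a b Finset.univ p = makespanOf a b Finset.univ)
    (hpmax : ∀ k : Fin n,
      jobVal a b Finset.univ k = makespanOf a b Finset.univ → k ≤ p) :
    makespanOf a b (Finset.univ.erase p) + a p ≤ makespanOf a b Finset.univ := by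
  have hC : a p ≤ makespanOf a b Finset.univ := by
    rw [← hp]
    unfold jobVal
    have hmem : p ∈ Finset.univ.filter (fun i => i ≤ p) := by simp
    have h1 : a p ≤ ∑ i ∈ Finset.univ.filter (fun i => i ≤ p), a i :=
      Finset.single_le_sum (fun i _ => Nat.zero_le _) hmem
    omega
  have key : ∀ k ∈ Finset.univ.erase p,
      jobVal a b (Finset.univ.erase p) k + a p ≤ makespanOf a b Finset.univ := by
    intro k hk
    have hkp : k ≠ p := (Finset.mem_erase.mp hk).1
    have hle : jobVal a b Finset.univ k ≤ makespanOf a b Finset.univ :=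
      Finset.le_sup (Finset.mem_univ k)
    have hgoal : jobVal a b (Finset.univ.erase p) k + a p ≤ jobVal a b Finset.univ k := by
      unfold jobVal
      rw [Finset.filter_erase, Finset.filter_erase]
      rcases lt_or_gt_of_ne hkp with h | h
      · -- k < p : p not in first filter, p in second filter
        have h1 : (Finset.univ.filter (fun i : Fin n => i ≤ k)).erase p
            = Finset.univ.filter (fun i : Fin n => i ≤ k) := by
          apply Finset.erase_eq_of_notMem
          simp only [Finset.mem_filter, Finset.mem_univ, true_and]
          exact not_le.mpr h
        rw [h1]
        have h2 : ∑ j ∈ (Finset.univ.filter (fun j : Fin n => k ≤ j)).erase p, b j + b p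
            = ∑ j ∈ Finset.univ.filter (fun j : Fin n => k ≤ j), b j := by
          apply Finset.sum_erase_add
          simp [h.le]
        have h3 := hab p
        omega
      · -- p < k : p in first filter, p not in second filter
        have h1 : ∑ i ∈ (Finset.univ.filter (fun i : Fin n => i ≤ k)).erase p, a i + a p
            = ∑ i ∈ Finset.univ.filter (fun i : Fin n => i ≤ k), a i := by
          apply Finset.sum_erase_add
          simp [h.le]
        have h2 : (Finset.univ.filter (fun j : Fin n => k ≤ j)).erase p
            = Finset.univ.filter (fun j : Fin n => k ≤ j) := by
          apply Finset.erase_eq_of_notMem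
          simp only [Finset.mem_filter, Finset.mem_univ, true_and]
          exact not_le.mpr h
        rw [h2]
        omega
    omega
  have hsup : makespanOf a b (Finset.univ.erase p) ≤ makespanOf a b Finset.univ - a p := by
    apply Finset.sup_le
    intro k hk
    have := key k hk
    omega
  omega
end
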